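/- Let Γ be a finite connected simple graph in which no vertex is a singleton twin. Then every minimal resolving set of Γ is a basis of Γ, i.e., every minimal resolving set has cardinality equal to the metric dimension β(Γ). -/

import Mathlib

open SimpleGraph

/-- `W` is a resolving set for the graph `Γ`: any two distinct vertices are
distinguished by their distance to some element of `W`. -/
def IsResolvingSet {V : Type*} (Γ : SimpleGraph V) (W : Set V) : Prop :=
  ∀ u v : V, u ≠ v → ∃ w ∈ W, Γ.dist u w ≠ Γ.dist v w

/-- The metric dimension of a graph: the least cardinality of a resolving set. -/
noncomputable def metricDim {V : Type*} (Γ : SimpleGraph V) : ℕ :=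
  sInf {n | ∃ W : Set V, W.Finite ∧ W.ncard = n ∧ IsResolvingSet Γ W}

/-- A minimal resolving set: a resolving set no proper subset of which resolves. -/
def IsMinimalResolvingSet {V : Type*} (Γ : SimpleGraph V) (W : Set V) : Prop :=
  IsResolvingSet Γ W ∧ ∀ W' : Set V, W' ⊂ W → ¬ IsResolvingSet Γ W'

/-- Two vertices are twins if they have the same open neighborhood or the same
closed neighborhood. -/
def AreTwins {V : Type*} (Γ : SimpleGraph V) (u v : V) : Prop :=
  Γ.neighborSet u = Γ.neighborSet v ∨
    insert u (Γ.neighborSet u) = insert v (Γ.neighborSet v)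

/-- The twin class of a vertex. -/
def twinClass {V : Type*} (Γ : SimpleGraph V) (u : V) : Set V :=
  {v | AreTwins Γ u v}

/-- The number of twin classes of a graph. -/
noncomputable def twinClassCount {V : Type*} (Γ : SimpleGraph V) : ℕ :=
  {S : Set V | ∃ u : V, S = twinClass Γ u}.ncard

/-- Resolving sets of `Γ` have the exchange property. -/
def HasExchangeProperty {V : Type*} (Γ : SimpleGraph V) : Prop :=
  ∀ W₁ W₂ : Set V, IsMinimalResolvingSet Γ W₁ → IsMinimalResolvingSet Γ W₂ →
    ∀ u ∈ W₁, ∃ v ∈ W₂, IsMinimalResolvingSet Γ ((W₁ \ {u}) ∪ {v})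

/-- The (undirected) power graph of a group `G`: distinct `x`, `y` are adjacent
iff one is a positive power of the other. -/
def powerGraph (G : Type*) [Group G] : SimpleGraph G :=
  SimpleGraph.fromRel (fun x y => ∃ m : ℕ, 0 < m ∧ y = x ^ m)

/-- `R{x,y}`: the set of vertices having different distances to `x` and `y`. -/
def Rset {V : Type*} (Γ : SimpleGraph V) (x y : V) : Set V :=
  {z | Γ.dist x z ≠ Γ.dist y z}

/-! In a connected graph twins are equidistant from every other vertex, so a resolving set
contains all but at most one vertex of each twin class. Conversely, when no twin class is a
singleton, every such set resolves: two non-twins are separated by a third vertex `z`, and then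
also by `z` or by a twin of `z` lying in the set. So a minimal resolving set misses exactly one
vertex of each twin class, and any two of them have complements of the same size. -/

namespace AreTwins

variable {V : Type*} {Γ : SimpleGraph V} {a b c x : V}

lemma refl (a : V) : AreTwins Γ a a := Or.inl rfl

lemma symm (h : AreTwins Γ a b) : AreTwins Γ b a := h.imp Eq.symm Eq.symm

/-- `b ~ c` forces `c ~ a`, then `a ~ b`, and so `a ∈ N(b) = N(a)`. -/
lemma false_of_open_of_closed (hab : a ≠ b) (hbc : b ≠ c)
    (h₁ : Γ.neighborSet a = Γ.neighborSet b)
    (h₂ : insert b (Γ.neighborSet b) = insert c (Γ.neighborSet c)) : False := by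
  have hcb : Γ.Adj c b := by
    have hb : b ∈ insert c (Γ.neighborSet c) := h₂ ▸ Set.mem_insert b _
    exact hb.resolve_left hbc
  have hac : Γ.Adj a c := (h₁ ▸ hcb.symm : c ∈ Γ.neighborSet a)
  have ha : a ∈ insert b (Γ.neighborSet b) := h₂ ▸ Set.mem_insert_of_mem c hac.symm
  exact Γ.irrefl (h₁ ▸ ha.resolve_left hab : a ∈ Γ.neighborSet a)

lemma trans (h₁ : AreTwins Γ a b) (h₂ : AreTwins Γ b c) : AreTwins Γ a c := by
  rcases eq_or_ne a b with rfl | hab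
  · exact h₂
  rcases eq_or_ne b c with rfl | hbc
  · exact h₁
  rcases h₁ with h₁ | h₁ <;> rcases h₂ with h₂ | h₂
  · exact Or.inl (h₁.trans h₂)
  · exact (false_of_open_of_closed hab hbc h₁ h₂).elim
  · exact (false_of_open_of_closed hbc.symm hab.symm h₂.symm h₁.symm).elim
  · exact Or.inr (h₁.trans h₂)

lemma eq_or_adj_of_adj (h : AreTwins Γ a b) (hx : Γ.Adj a x) : x = b ∨ Γ.Adj b x := by
  rcases h with h | h
  · exact Or.inr (h ▸ hx : x ∈ Γ.neighborSet b)
  · exact (h ▸ Set.mem_insert_of_mem a hx : x ∈ insert b (Γ.neighborSet b))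

/-- A twin `b` of `a` reaches the successor of `a` on a geodesic to `x` in at most one step. -/
lemma dist_le (hconn : Γ.Connected) (h : AreTwins Γ a b) (hxa : x ≠ a) :
    Γ.dist b x ≤ Γ.dist a x := by
  obtain ⟨p, hp⟩ := hconn.exists_walk_length_eq_dist a x
  obtain ⟨w, haw, q, rfl⟩ := SimpleGraph.Walk.exists_eq_cons_of_ne hxa.symm p
  have hbw : Γ.dist b w ≤ 1 := by
    rcases h.eq_or_adj_of_adj haw with rfl | hbw
    · simp
    · exact (SimpleGraph.dist_eq_one_iff_adj.mpr hbw).le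
  calc Γ.dist b x ≤ Γ.dist b w + Γ.dist w x := hconn.dist_triangle
    _ ≤ 1 + q.length := add_le_add hbw (SimpleGraph.dist_le q)
    _ = Γ.dist a x := by rw [← hp, SimpleGraph.Walk.length_cons, add_comm]

lemma dist_eq (hconn : Γ.Connected) (h : AreTwins Γ a b) (hxa : x ≠ a) (hxb : x ≠ b) :
    Γ.dist a x = Γ.dist b x :=
  le_antisymm (h.symm.dist_le hconn hxb) (h.dist_le hconn hxa)

end AreTwins

section Twins

variable {V : Type*} {Γ : SimpleGraph V}

lemma areTwins_of_forall_dist_eq {u v : V} (huv : u ≠ v)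
    (h : ∀ z, z ≠ u → z ≠ v → Γ.dist u z = Γ.dist v z) : AreTwins Γ u v := by
  have hadj : ∀ z, z ≠ u → z ≠ v → (Γ.Adj u z ↔ Γ.Adj v z) := fun z hzu hzv => by
    rw [← SimpleGraph.dist_eq_one_iff_adj, ← SimpleGraph.dist_eq_one_iff_adj, h z hzu hzv]
  by_cases huv' : Γ.Adj u v
  · refine Or.inr (Set.ext fun z => ?_)
    rcases eq_or_ne z u with rfl | hzu
    · simp [huv'.symm]
    rcases eq_or_ne z v with rfl | hzv
    · simp [huv']
    simp [hzu, hzv, hadj z hzu hzv]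
  · refine Or.inl (Set.ext fun z => ?_)
    rcases eq_or_ne z u with rfl | hzu
    · simpa using fun h : Γ.Adj v z => huv' h.symm
    rcases eq_or_ne z v with rfl | hzv
    · simp [huv']
    exact hadj z hzu hzv

lemma exists_twin_ne (hns : ∀ u : V, twinClass Γ u ≠ {u}) (u : V) :
    ∃ v, AreTwins Γ u v ∧ v ≠ u := by
  by_contra! h
  exact hns u (Set.eq_singleton_iff_unique_mem.mpr ⟨AreTwins.refl u, h⟩)

end Twins

section Resolving

variable {V : Type*} {Γ : SimpleGraph V} {W : Set V}

lemma IsResolvingSet.mem_or_mem_of_areTwins (hconn : Γ.Connected) (hW : IsResolvingSet Γ W)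
    {a b : V} (hab : a ≠ b) (h : AreTwins Γ a b) : a ∈ W ∨ b ∈ W := by
  by_contra! hout
  obtain ⟨w, hw, hne⟩ := hW a b hab
  exact hne (h.dist_eq hconn (ne_of_mem_of_not_mem hw hout.1) (ne_of_mem_of_not_mem hw hout.2))

lemma isResolvingSet_of_forall_areTwins (hconn : Γ.Connected)
    (hns : ∀ u : V, twinClass Γ u ≠ {u})
    (hW : ∀ a b : V, a ≠ b → AreTwins Γ a b → a ∈ W ∨ b ∈ W) : IsResolvingSet Γ W := by
  intro u v huv
  by_cases huW : u ∈ W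
  · exact ⟨u, huW, by simpa using (hconn.pos_dist_of_ne huv.symm).ne⟩
  by_cases hvW : v ∈ W
  · exact ⟨v, hvW, by simpa using (hconn.pos_dist_of_ne huv).ne'⟩
  obtain ⟨z, hzu, hzv, hz⟩ : ∃ z, z ≠ u ∧ z ≠ v ∧ Γ.dist u z ≠ Γ.dist v z := by
    by_contra! h
    exact (hW u v huv (areTwins_of_forall_dist_eq huv h)).elim huW hvW
  by_cases hzW : z ∈ W
  · exact ⟨z, hzW, hz⟩
  -- A twin of `z` lies in `W` and sees `u` and `v` at the same distances as `z` does.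
  obtain ⟨b, hzb, hbz⟩ := exists_twin_ne hns z
  have hbW : b ∈ W := (hW z b hbz.symm hzb).resolve_left hzW
  have hdist : ∀ x, x ≠ z → x ∉ W → Γ.dist x b = Γ.dist x z := fun x hxz hx => by
    rw [SimpleGraph.dist_comm, ← hzb.dist_eq hconn hxz (ne_of_mem_of_not_mem hbW hx).symm,
      SimpleGraph.dist_comm]
  exact ⟨b, hbW, by rwa [hdist u hzu.symm huW, hdist v hzv.symm hvW]⟩

lemma IsMinimalResolvingSet.existsUnique_not_mem_areTwins (hconn : Γ.Connected)
    (hns : ∀ u : V, twinClass Γ u ≠ {u}) (hW : IsMinimalResolvingSet Γ W) (u : V) :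
    ∃! x, x ∉ W ∧ AreTwins Γ u x := by
  obtain ⟨x, hx⟩ : ∃ x, x ∉ W ∧ AreTwins Γ u x := by
    by_contra hex
    have hall : ∀ x, AreTwins Γ u x → x ∈ W := fun x hux => by_contra fun hx => hex ⟨x, hx, hux⟩
    refine hW.2 (W \ {u}) (Set.sdiff_singleton_ssubset.mpr (hall u (AreTwins.refl u)))
      (isResolvingSet_of_forall_areTwins hconn hns fun a b hab h => ?_)
    rcases eq_or_ne a u with rfl | hau
    · exact Or.inr ⟨hall b h, fun hb => hab hb.symm⟩
    rcases eq_or_ne b u with rfl | hbu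
    · exact Or.inl ⟨hall a h.symm, hab⟩
    exact (hW.1.mem_or_mem_of_areTwins hconn hab h).imp (fun ha => ⟨ha, hau⟩)
      (fun hb => ⟨hb, hbu⟩)
  refine ⟨x, hx, fun y hy => ?_⟩
  by_contra hyx
  exact (hW.1.mem_or_mem_of_areTwins hconn hyx (hy.2.symm.trans hx.2)).elim hy.1 hx.1

lemma IsMinimalResolvingSet.ncard_eq [Finite V] (hconn : Γ.Connected)
    (hns : ∀ u : V, twinClass Γ u ≠ {u}) {W₁ W₂ : Set V}
    (h₁ : IsMinimalResolvingSet Γ W₁) (h₂ : IsMinimalResolvingSet Γ W₂) :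
    W₁.ncard = W₂.ncard := by
  choose f hf hf_unique using h₂.existsUnique_not_mem_areTwins hconn hns
  -- `u ↦ f u`, the twin of `u` outside `W₂`, is a bijection `W₁ᶜ → W₂ᶜ`.
  have hcompl : W₁ᶜ.ncard = W₂ᶜ.ncard := by
    refine Set.ncard_congr (fun u _ => f u) (fun u _ => (hf u).1) (fun u v hu hv huv => ?_)
      (fun y hy => ?_)
    · have huv : AreTwins Γ u v := (hf u).2.trans (huv ▸ (hf v).2.symm)
      exact (h₁.existsUnique_not_mem_areTwins hconn hns u).unique ⟨hu, .refl u⟩ ⟨hv, huv⟩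
    · obtain ⟨x, ⟨hx, hyx⟩, -⟩ := h₁.existsUnique_not_mem_areTwins hconn hns y
      exact ⟨x, hx, (hf_unique x y ⟨hy, hyx.symm⟩).symm⟩
  have := Set.ncard_add_ncard_compl W₁
  have := Set.ncard_add_ncard_compl W₂
  omega

lemma IsResolvingSet.exists_subset_isMinimalResolvingSet [Finite V] (hW : IsResolvingSet Γ W) :
    ∃ W' ⊆ W, IsMinimalResolvingSet Γ W' := by
  obtain ⟨W', hW'W, hmin⟩ := exists_minimal_le_of_wellFoundedLT (IsResolvingSet Γ) W hW
  exact ⟨W', hW'W, hmin.prop, fun _ hss => hmin.not_prop_of_ssubset hss⟩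

end Resolving

/-- In a finite connected graph with no singleton twin, every
minimal resolving set is a basis, i.e. has cardinality the metric dimension. -/
theorem minimal_resolving_is_basis_of_no_singleton_twin
    {V : Type*} [Fintype V] (Γ : SimpleGraph V) (hconn : Γ.Connected)
    (hns : ∀ u : V, twinClass Γ u ≠ {u})
    (W : Set V) (hW : IsMinimalResolvingSet Γ W) :
    W.ncard = metricDim Γ := by
  unfold metricDim
  refine Eq.symm (IsLeast.csInf_eq ⟨⟨W, W.toFinite, rfl, hW.1⟩, ?_⟩)
  rintro _ ⟨W', -, rfl, hW'⟩
  obtain ⟨W'', hW''W', hW''⟩ := hW'.exists_subset_isMinimalResolvingSet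
  calc W.ncard = W''.ncard := hW.ncard_eq hconn hns hW''
    _ ≤ W'.ncard := Set.ncard_le_ncard hW''W'
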